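/- arXiv:math/0502062 — 4 statements merged into one kernel-verified Lean document; each statement's English description precedes it below -/
import Mathlib

section
/- Chebyshev's theorem: there exist constants c₁ > 0 and c₂ > 0 such that c₁·x/ln x ≤ π(x) ≤ c₂·x/ln x for all sufficiently large x. -/
open Finset

lemma pc_card (n : ℕ) :
    Nat.primeCounting n = ((Finset.range (n+1)).filter Nat.Prime).card := by
  rw [Nat.primeCounting, ← Nat.primesBelow_card_eq_primeCounting', Nat.primesBelow]

lemma lower_nat (n : ℕ) (hn : 4 ≤ n) :
    4 ^ n ≤ (2*n) ^ (Nat.primeCounting (2*n) + 1) := by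
  have h1 : Nat.centralBinom n ≤ (2*n) ^ (Nat.primeCounting (2*n)) := by
    conv_lhs => rw [← Nat.prod_pow_factorization_centralBinom n]
    rw [pc_card]
    rw [← Finset.prod_subset (Finset.filter_subset Nat.Prime (Finset.range (2*n+1)))
      (fun i hmem hi => by
        rw [Finset.mem_range] at hmem
        rw [Finset.mem_filter] at hi
        rw [Nat.factorization_eq_zero_of_not_prime _ (fun hp => hi ⟨by simpa using hmem, hp⟩),
          pow_zero])]
    calc ∏ p ∈ (Finset.range (2*n+1)).filter Nat.Prime,
          p ^ (Nat.centralBinom n).factorization p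
        ≤ ∏ _p ∈ (Finset.range (2*n+1)).filter Nat.Prime, (2*n) := by
          apply Finset.prod_le_prod
          · intro i _; positivity
          · intro i _
            exact Nat.pow_factorization_choose_le (by omega)
      _ = (2*n) ^ ((Finset.range (2*n+1)).filter Nat.Prime).card := by
          rw [Finset.prod_const]
  calc 4 ^ n ≤ n * Nat.centralBinom n := (Nat.four_pow_lt_mul_centralBinom n hn).le
    _ ≤ (2*n) * (2*n) ^ (Nat.primeCounting (2*n)) :=
        Nat.mul_le_mul (by omega) h1
    _ = (2*n) ^ (Nat.primeCounting (2*n) + 1) := by ring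

lemma upper_card (n : ℕ) :
    Nat.primeCounting n ≤ (Nat.sqrt n + 1) + ((Finset.Ioc (Nat.sqrt n) n).filter Nat.Prime).card := by
  rw [pc_card]
  have hsub : (Finset.range (n+1)).filter Nat.Prime ⊆
      (Finset.range (Nat.sqrt n + 1)).filter Nat.Prime ∪
      (Finset.Ioc (Nat.sqrt n) n).filter Nat.Prime := by
    intro p hp
    rw [Finset.mem_filter, Finset.mem_range] at hp
    rcases le_or_gt p (Nat.sqrt n) with h | h
    · exact Finset.mem_union_left _ (by rw [Finset.mem_filter, Finset.mem_range]; exact ⟨by omega, hp.2⟩)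
    · exact Finset.mem_union_right _ (by rw [Finset.mem_filter, Finset.mem_Ioc]; exact ⟨⟨h, by omega⟩, hp.2⟩)
  calc ((Finset.range (n+1)).filter Nat.Prime).card
      ≤ _ := Finset.card_le_card hsub
    _ ≤ ((Finset.range (Nat.sqrt n + 1)).filter Nat.Prime).card
        + ((Finset.Ioc (Nat.sqrt n) n).filter Nat.Prime).card := Finset.card_union_le _ _
    _ ≤ (Nat.sqrt n + 1) + ((Finset.Ioc (Nat.sqrt n) n).filter Nat.Prime).card := by
        gcongr
        calc ((Finset.range (Nat.sqrt n + 1)).filter Nat.Prime).card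
            ≤ (Finset.range (Nat.sqrt n + 1)).card := Finset.card_le_card (Finset.filter_subset _ _)
          _ = Nat.sqrt n + 1 := Finset.card_range _

lemma upper_pow (n : ℕ) :
    (Nat.sqrt n + 1) ^ ((Finset.Ioc (Nat.sqrt n) n).filter Nat.Prime).card ≤ 4 ^ n := by
  calc (Nat.sqrt n + 1) ^ ((Finset.Ioc (Nat.sqrt n) n).filter Nat.Prime).card
      ≤ ∏ p ∈ (Finset.Ioc (Nat.sqrt n) n).filter Nat.Prime, p := by
        apply Finset.pow_card_le_prod
        intro p hp
        rw [Finset.mem_filter, Finset.mem_Ioc] at hp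
        omega
    _ ≤ primorial n := by
        apply Nat.le_of_dvd (primorial_pos n)
        apply Finset.prod_dvd_prod_of_subset
        intro p hp
        rw [Finset.mem_filter, Finset.mem_Ioc] at hp
        rw [Finset.mem_filter, Finset.mem_range]
        exact ⟨by omega, hp.2⟩
    _ ≤ 4 ^ n := primorial_le_4_pow n

-- bounds on log 4
lemma log_four_bounds : (4:ℝ)/3 ≤ Real.log 4 ∧ Real.log 4 ≤ 3/2 := by
  have h : Real.log 4 = 2 * Real.log 2 := by
    rw [show (4:ℝ) = 2^2 by norm_num, Real.log_pow]; push_cast; ring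
  constructor
  · nlinarith [Real.log_two_gt_d9]
  · nlinarith [Real.log_two_lt_d9]

open Filter in
lemma ev_log_le : ∀ᶠ x : ℝ in atTop, Real.log x ≤ x / 100 := by
  have h := (Real.isLittleO_log_id_atTop.def (by norm_num : (0:ℝ) < 1/100))
  filter_upwards [h, eventually_ge_atTop (1:ℝ)] with x hx hx1
  simp only [Real.norm_eq_abs, id] at hx
  rw [abs_of_nonneg (Real.log_nonneg hx1), abs_of_nonneg (by linarith : (0:ℝ) ≤ x)] at hx
  linarith

open Filter in
lemma ev_log_le_sqrt : ∀ᶠ x : ℝ in atTop, Real.log x ≤ Real.sqrt x / 50 := by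
  have hs : Tendsto Real.sqrt atTop atTop := by
    refine tendsto_atTop.2 fun b => ?_
    filter_upwards [eventually_ge_atTop (b^2)] with x hx
    exact Real.le_sqrt_of_sq_le hx
  filter_upwards [hs.eventually ev_log_le, eventually_ge_atTop (1:ℝ)] with x hx hx1
  have h1 : Real.log (Real.sqrt x) = Real.log x / 2 := Real.log_sqrt (by linarith)
  rw [h1] at hx
  linarith

open Filter in
theorem chebyshev_theorem :
    ∃ c₁ c₂ : ℝ, 0 < c₁ ∧ 0 < c₂ ∧ ∀ᶠ x : ℝ in atTop,
      c₁ * (x / Real.log x) ≤ (Nat.primeCounting ⌊x⌋₊ : ℝ) ∧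
      (Nat.primeCounting ⌊x⌋₊ : ℝ) ≤ c₂ * (x / Real.log x) := by
  obtain ⟨hl4, hl4'⟩ := log_four_bounds
  refine ⟨1/4, 7, by norm_num, by norm_num, ?_⟩
  filter_upwards [eventually_ge_atTop (100:ℝ), ev_log_le, ev_log_le_sqrt] with x hx hlx hlsx
  have hx0 : (0:ℝ) < x := by linarith
  have hlogpos : 0 < Real.log x := Real.log_pos (by linarith)
  set N := ⌊x⌋₊ with hNdef
  have hNx : (N:ℝ) ≤ x := Nat.floor_le hx0.le
  have hxN : x < N + 1 := Nat.lt_floor_add_one x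
  have hN100 : 100 ≤ N := Nat.le_floor (by exact_mod_cast hx)
  constructor
  · -- lower bound
    rw [← mul_div_assoc, div_le_iff₀ hlogpos]
    set n := N / 2 with hn
    have hn4 : 4 ≤ n := by omega
    have h2n : 2*n ≤ N := by omega
    have h2n' : N ≤ 2*n + 1 := by omega
    have h2npos : (0:ℝ) < (2*n : ℕ) := by positivity
    -- key log inequality
    have key : (n:ℝ) * Real.log 4 ≤ ((Nat.primeCounting (2*n) : ℝ) + 1) * Real.log (2*n : ℕ) := by
      have hcast : ((4:ℝ))^n ≤ ((2*n : ℕ):ℝ) ^ (Nat.primeCounting (2*n) + 1) := by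
        exact_mod_cast lower_nat n hn4
      have := Real.log_le_log (by positivity) hcast
      rw [Real.log_pow, Real.log_pow] at this
      push_cast at this ⊢
      convert this using 2
    have hmono : Nat.primeCounting (2*n) ≤ Nat.primeCounting N :=
      Nat.monotone_primeCounting h2n
    have hlog2n : Real.log (2*n : ℕ) ≤ Real.log x := by
      apply Real.log_le_log h2npos
      calc ((2*n : ℕ):ℝ) ≤ (N:ℝ) := by exact_mod_cast h2n
        _ ≤ x := hNx
    have key2 : (n:ℝ) * Real.log 4 ≤ ((Nat.primeCounting N : ℝ) + 1) * Real.log x := by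
      calc (n:ℝ) * Real.log 4 ≤ ((Nat.primeCounting (2*n) : ℝ) + 1) * Real.log (2*n : ℕ) := key
        _ ≤ ((Nat.primeCounting N : ℝ) + 1) * Real.log x := by
            apply mul_le_mul _ hlog2n (Real.log_nonneg (by exact_mod_cast Nat.one_le_iff_ne_zero.2 (by omega))) (by positivity)
            have : (Nat.primeCounting (2*n) : ℝ) ≤ (Nat.primeCounting N : ℝ) := by exact_mod_cast hmono
            linarith
    have hnx : (x - 2)/2 ≤ (n:ℝ) := by
      have h1 : (N:ℝ) ≤ 2*(n:ℝ)+1 := by exact_mod_cast h2n'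
      linarith
    have hP0 : (0:ℝ) ≤ (Nat.primeCounting N : ℝ) := by positivity
    nlinarith [mul_le_mul hnx (le_refl (Real.log 4)) (by linarith) (by positivity : (0:ℝ) ≤ (n:ℝ))]
  · -- upper bound
    rw [← mul_div_assoc, le_div_iff₀ hlogpos]
    set m := Nat.sqrt N with hm
    set c := ((Finset.Ioc m N).filter Nat.Prime).card with hc
    have hNpos : (0:ℝ) < (N:ℝ) := by
      have : (0:ℕ) < N := by omega
      exact_mod_cast this
    -- h1 : c * log (m+1) ≤ x * log 4
    have h1 : (c:ℝ) * Real.log ((m:ℝ)+1) ≤ x * Real.log 4 := by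
      have hcast : ((m:ℝ)+1) ^ c ≤ (4:ℝ) ^ N := by
        have := upper_pow N
        exact_mod_cast this
      have hl := Real.log_le_log (by positivity) hcast
      rw [Real.log_pow, Real.log_pow] at hl
      push_cast at hl
      calc (c:ℝ) * Real.log ((m:ℝ)+1) ≤ (N:ℝ) * Real.log 4 := hl
        _ ≤ x * Real.log 4 := by
            apply mul_le_mul_of_nonneg_right hNx (by linarith)
    -- h2 : log x ≤ 4 * log (m+1)
    have h2 : Real.log x ≤ 4 * Real.log ((m:ℝ)+1) := by
      have hNlt : (N:ℝ) < ((m:ℝ)+1)^2 := by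
        have := Nat.lt_succ_sqrt' N
        exact_mod_cast this
      have hlogN2 : Real.log (N:ℝ) ≤ 2 * Real.log ((m:ℝ)+1) := by
        have := Real.log_le_log hNpos hNlt.le
        rwa [Real.log_pow] at this
        -- log ((m+1)^2) = 2 log (m+1)
      have hlog2N : Real.log 2 ≤ Real.log (N:ℝ) := by
        apply Real.log_le_log (by norm_num)
        have : (2:ℕ) ≤ N := by omega
        exact_mod_cast this
      have hxlog : Real.log x ≤ Real.log (N:ℝ) + Real.log 2 := by
        have hx2 : x/2 ≤ (N:ℝ) := by linarith
        have := Real.log_le_log (by linarith : (0:ℝ) < x/2) hx2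
        rw [Real.log_div (by linarith) (by norm_num)] at this
        linarith
      push_cast at hlogN2
      linarith
    -- h3 : c * log x ≤ 6x
    have h3 : (c:ℝ) * Real.log x ≤ 6 * x := by
      have hc0 : (0:ℝ) ≤ (c:ℝ) := by positivity
      calc (c:ℝ) * Real.log x ≤ (c:ℝ) * (4 * Real.log ((m:ℝ)+1)) :=
            mul_le_mul_of_nonneg_left h2 hc0
        _ = 4 * ((c:ℝ) * Real.log ((m:ℝ)+1)) := by ring
        _ ≤ 4 * (x * Real.log 4) := by linarith
        _ ≤ 6 * x := by nlinarith
    -- h4 : m+1 ≤ sqrt x + 1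
    have h4 : ((m:ℝ)+1) ≤ Real.sqrt x + 1 := by
      have hm2 : ((m:ℝ))^2 ≤ x := by
        have := Nat.sqrt_le' N
        calc ((m:ℝ))^2 = ((m^2 : ℕ):ℝ) := by push_cast; ring
          _ ≤ (N:ℝ) := by exact_mod_cast this
          _ ≤ x := hNx
      have : (m:ℝ) ≤ Real.sqrt x := (Real.le_sqrt (by positivity) hx0.le).2 hm2
      linarith
    -- h5 : (sqrt x + 2) * log x ≤ x
    have h5 : (Real.sqrt x + 2) * Real.log x ≤ x := by
      have hsq : Real.sqrt x ^ 2 = x := Real.sq_sqrt hx0.le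
      have hs1 : (1:ℝ) ≤ Real.sqrt x := by nlinarith [Real.sqrt_nonneg x]
      nlinarith [Real.sqrt_nonneg x, hlsx, hlogpos]
    -- combine
    have hcard : (Nat.primeCounting N : ℝ) ≤ ((m:ℝ)+1) + (c:ℝ) := by
      have := upper_card N
      push_cast
      exact_mod_cast this
    calc (Nat.primeCounting N : ℝ) * Real.log x
        ≤ (((m:ℝ)+1) + (c:ℝ)) * Real.log x :=
          mul_le_mul_of_nonneg_right hcard hlogpos.le
      _ = ((m:ℝ)+1) * Real.log x + (c:ℝ) * Real.log x := by ring
      _ ≤ (Real.sqrt x + 2) * Real.log x + 6 * x := by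
          have := mul_le_mul_of_nonneg_right (by linarith : ((m:ℝ)+1) ≤ Real.sqrt x + 2) hlogpos.le
          linarith
      _ ≤ x + 6 * x := by linarith
      _ = 7 * x := by ring
end

section
/- The asymptotic π(x) ~ x/ln x holds if and only if ψ(x) ~ x, where ψ(x) = ∑_{n ≤ x} Λ(n) is the Chebyshev function. -/
/-!
Both `π(x) log x` and `ψ(x)` differ from `θ(x) = ∑_{p ≤ x} log p` by `o(x)`: prime powers `p^k`
with `k ≥ 2` contribute only `O(√x)` to `ψ - θ`, and Abel summation gives
`π(x) - θ(x) / log x = O(x / log² x)`. Hence `π(x) log x / x` and `ψ(x) / x` have the same limits.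
-/

open Asymptotics Filter Real Chebyshev

theorem Asymptotics.IsLittleO.tendsto_div_iff {α 𝕜 : Type*} [NormedField 𝕜] {l : Filter α}
    {f g h : α → 𝕜} {c : 𝕜} (hfg : (fun x => f x - g x) =o[l] h) :
    Tendsto (fun x => f x / h x) l (nhds c) ↔ Tendsto (fun x => g x / h x) l (nhds c) := by
  have hdiff : Tendsto (fun x => f x / h x - g x / h x) l (nhds 0) := by
    simpa only [sub_div] using hfg.tendsto_div_nhds_zero
  constructor
  · intro hf; simpa using hf.sub hdiff
  · intro hg; simpa using hg.add hdiff

theorem Real.isLittleO_sqrt_id : sqrt =o[atTop] id := by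
  refine (isLittleO_iff_tendsto fun x hx => by simp_all).mpr ?_
  simpa only [id, sqrt_div_self, Function.comp_def] using
    tendsto_inv_atTop_zero.comp tendsto_sqrt_atTop

theorem Real.isLittleO_div_log_id : (fun x => x / log x) =o[atTop] id := by
  refine (isLittleO_iff_tendsto fun x hx => by simp_all).mpr ?_
  refine tendsto_log_atTop.inv_tendsto_atTop.congr' ?_
  filter_upwards [eventually_ne_atTop 0] with x hx
  simp only [id, Pi.inv_apply]
  field_simp

namespace Chebyshev

theorem psi_eq_sum_Icc_one (x : ℝ) :
    ψ x = ∑ n ∈ Finset.Icc 1 ⌊x⌋₊, ArithmeticFunction.vonMangoldt n := by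
  rw [psi, ← Finset.Icc_add_one_left_eq_Ioc, zero_add]

theorem psi_sub_theta_isLittleO_id : (fun x => ψ x - θ x) =o[atTop] id :=
  isBigO_psi_sub_theta_sqrt.trans_isLittleO isLittleO_sqrt_id

theorem primeCounting_mul_log_sub_theta_isLittleO_id :
    (fun x => (Nat.primeCounting ⌊x⌋₊ : ℝ) * log x - θ x) =o[atTop] id := by
  refine IsBigO.trans_isLittleO ?_ isLittleO_div_log_id
  refine (primeCounting_sub_theta_div_log_isBigO.mul (isBigO_refl log atTop)).congr' ?_ ?_ <;>
  · filter_upwards [eventually_gt_atTop 1] with x hx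
    have := (log_pos hx).ne'
    field_simp

end Chebyshev

open ArithmeticFunction Filter in
theorem pnt_iff_chebyshev_psi :
    Tendsto (fun x : ℝ => (Nat.primeCounting ⌊x⌋₊ : ℝ) / (x / Real.log x)) atTop (nhds 1)
      ↔ Tendsto (fun x : ℝ => (∑ n ∈ Finset.Icc 1 ⌊x⌋₊, Λ n) / x) atTop (nhds 1) := by
  simp_rw [div_div_eq_mul_div, ← psi_eq_sum_Icc_one]
  refine IsLittleO.tendsto_div_iff ?_
  exact (primeCounting_mul_log_sub_theta_isLittleO_id.sub psi_sub_theta_isLittleO_id).congr_left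
    fun x => by ring
end

section
/- Mertens' second theorem: there exists a constant c such that ∑_{p ≤ x} 1/p = ln(ln x) + c + O(1/ln x) as x → ∞. -/
/-!
Legendre's formula `log n! = ∑_{p ≤ n} v_p(n!) log p`, with `n/p - 1 ≤ v_p(n!) ≤ n/(p-1)`,
combined with `n log n - n ≤ log n! ≤ n log n` and Chebyshev's bound `θ(n) ≤ n log 4`, gives
Mertens' first theorem: `∑_{p ≤ x} log p / p = log x + R(x)` with `R` bounded (the lower
bound costs the convergent series `∑ log k / (k (k - 1))`). Abel summation against `1 / log t`
turns this into `∑_{p ≤ x} 1/p = log log x + C + R(x) / log x - ∫_x^∞ R(t) / (t log² t) dt`,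
and both error terms are `O(1 / log x)` because `∫_x^∞ dt / (t log² t) = 1 / log x`.
-/

open Finset Real Filter Asymptotics MeasureTheory Set
open scoped Nat

namespace Mertens

lemma div_le_factorization_factorial {p : ℕ} (hp : p.Prime) (n : ℕ) :
    n / p ≤ (n)!.factorization p :=
  calc n / p ≤ (p * (n / p))!.factorization p := by
        rw [Nat.factorization_factorial_mul hp]; omega
    _ ≤ (n)!.factorization p :=
        (Nat.factorization_le_iff_dvd (Nat.factorial_ne_zero _) (Nat.factorial_ne_zero _)).mpr
          (Nat.factorial_dvd_factorial (Nat.mul_div_le n p)) p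

lemma div_sub_one_le_factorization_factorial {p : ℕ} (hp : p.Prime) (n : ℕ) :
    (n : ℝ) / p - 1 ≤ (n)!.factorization p :=
  calc (n : ℝ) / p - 1 ≤ ⌊(n : ℝ) / p⌋₊ := (Nat.sub_one_lt_floor _).le
    _ = (n / p : ℕ) := by rw [Nat.floor_div_eq_div]
    _ ≤ (n)!.factorization p := mod_cast div_le_factorization_factorial hp n

lemma factorization_factorial_le_div_sub_one {p : ℕ} (hp : p.Prime) (n : ℕ) :
    ((n)!.factorization p : ℝ) ≤ n / (p - 1) :=
  calc ((n)!.factorization p : ℝ) ≤ (n / (p - 1) : ℕ) :=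
        mod_cast Nat.factorization_factorial_le_div_pred hp n
    _ ≤ (n : ℝ) / (p - 1 : ℕ) := Nat.cast_div_le
    _ = n / (p - 1) := by rw [Nat.cast_pred hp.pos]

lemma primeFactors_factorial (n : ℕ) : (n)!.primeFactors = Nat.primesLE n := by
  ext p
  simp only [Nat.mem_primeFactors, Nat.mem_primesLE, ne_eq, Nat.factorial_ne_zero,
    not_false_eq_true, and_true]
  exact ⟨fun ⟨hp, hdvd⟩ => ⟨(hp.dvd_factorial).mp hdvd, hp⟩,
    fun ⟨hpn, hp⟩ => ⟨hp, (hp.dvd_factorial).mpr hpn⟩⟩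

lemma log_factorial_eq_sum_primesLE (n : ℕ) :
    log (n)! = ∑ p ∈ Nat.primesLE n, (n)!.factorization p * log p := by
  rw [log_nat_eq_sum_factorization, Finsupp.sum, Nat.support_factorization,
    primeFactors_factorial]

lemma log_div_mul_sub_one_le_rpow (k : ℕ) :
    log k / (k * (k - 1)) ≤ 4 * (k : ℝ) ^ (-(3 / 2) : ℝ) := by
  rcases lt_or_ge k 2 with hk | hk
  · interval_cases k <;> simp
  have hk' : (2 : ℝ) ≤ k := mod_cast hk
  have hlog : log k ≤ 2 * (k : ℝ) ^ (1 / 2 : ℝ) := by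
    have := log_natCast_le_rpow_div k (ε := 1 / 2) (by norm_num)
    linarith
  have hsplit : (k : ℝ) ^ (1 / 2 : ℝ) = k ^ 2 * (k : ℝ) ^ (-(3 / 2) : ℝ) := by
    rw [← rpow_natCast, ← rpow_add (by positivity)]; norm_num
  have hpos : 0 ≤ (k : ℝ) ^ (-(3 / 2) : ℝ) := by positivity
  rw [div_le_iff₀ (by nlinarith)]
  calc log k ≤ 2 * (k ^ 2 * (k : ℝ) ^ (-(3 / 2) : ℝ)) := hsplit ▸ hlog
    _ ≤ 4 * (k : ℝ) ^ (-(3 / 2) : ℝ) * (k * (k - 1)) := by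
          nlinarith [mul_nonneg (mul_nonneg hpos (Nat.cast_nonneg k)) (sub_nonneg.mpr hk')]

lemma log_div_mul_sub_one_nonneg (k : ℕ) : 0 ≤ log k / (k * (k - 1)) := by
  rcases k with _ | k
  · simp
  · exact div_nonneg (log_natCast_nonneg _) (by push_cast; nlinarith)

lemma summable_log_div_mul_sub_one : Summable fun k : ℕ => log k / (k * (k - 1)) :=
  .of_nonneg_of_le log_div_mul_sub_one_nonneg log_div_mul_sub_one_le_rpow
    ((summable_nat_rpow.mpr (by norm_num)).mul_left 4)

lemma log_factorial_le (n : ℕ) : log (n)! ≤ n * log n := by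
  rcases eq_or_ne n 0 with rfl | hn
  · simp
  calc log (n)! ≤ log ((n : ℝ) ^ n) :=
        log_le_log (by positivity) (mod_cast Nat.factorial_le_pow n)
    _ = n * log n := log_pow n n

lemma mul_log_sub_le_log_factorial {n : ℕ} (hn : n ≠ 0) : n * log n - n ≤ log (n)! := by
  have := Stirling.le_log_factorial_stirling hn
  have : 0 ≤ log n := log_natCast_nonneg n
  have : 0 ≤ log (2 * π) := log_nonneg (by linarith [two_le_pi])
  linarith

theorem sum_primesLE_log_div_le {n : ℕ} (hn : n ≠ 0) :
    ∑ p ∈ Nat.primesLE n, log p / p ≤ log n + log 4 := by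
  have hn' : (0 : ℝ) < n := by positivity
  have hsum : n * ∑ p ∈ Nat.primesLE n, log p / p ≤ log (n)! + Chebyshev.theta n := by
    rw [log_factorial_eq_sum_primesLE, Chebyshev.theta_eq_sum_primesLE_log, mul_sum,
      ← sum_add_distrib]
    refine sum_le_sum fun p hp => ?_
    have hmul := mul_le_mul_of_nonneg_right
      (div_sub_one_le_factorization_factorial (Nat.prime_of_mem_primesLE hp) n)
      (log_natCast_nonneg p)
    calc (n : ℝ) * (log p / p) = (n / p - 1) * log p + log p := by ring
      _ ≤ _ := by linarith
  have hθ := Chebyshev.theta_le_log4_mul_x n.cast_nonneg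
  have := log_factorial_le n
  refine le_of_mul_le_mul_left ?_ hn'
  linarith

theorem log_sub_le_sum_primesLE_log_div {n : ℕ} (hn : n ≠ 0) :
    log n - 1 - ∑' k : ℕ, log k / (k * (k - 1)) ≤ ∑ p ∈ Nat.primesLE n, log p / p := by
  have hn' : (0 : ℝ) < n := by positivity
  have htail :
      ∑ p ∈ Nat.primesLE n, log p / (p * (p - 1)) ≤ ∑' k : ℕ, log k / (k * (k - 1)) :=
    summable_log_div_mul_sub_one.sum_le_tsum _ fun k _ => log_div_mul_sub_one_nonneg k
  have hsum : log (n)! ≤ n * ∑ p ∈ Nat.primesLE n, log p / p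
      + n * ∑ p ∈ Nat.primesLE n, log p / (p * (p - 1)) := by
    rw [log_factorial_eq_sum_primesLE, mul_sum, mul_sum, ← sum_add_distrib]
    refine sum_le_sum fun p hp => ?_
    have hp := Nat.prime_of_mem_primesLE hp
    have hp0 : (p : ℝ) ≠ 0 := mod_cast hp.ne_zero
    have hp1 : (p : ℝ) - 1 ≠ 0 := sub_ne_zero.mpr (mod_cast hp.ne_one)
    calc ((n)!.factorization p : ℝ) * log p ≤ n / (p - 1) * log p :=
          mul_le_mul_of_nonneg_right (factorization_factorial_le_div_sub_one hp n)
            (log_natCast_nonneg p)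
      _ = n * (log p / p) + n * (log p / (p * (p - 1))) := by
          field_simp
          ring
  have := mul_log_sub_le_log_factorial hn
  have := mul_le_mul_of_nonneg_left htail hn'.le
  refine le_of_mul_le_mul_left ?_ hn'
  linarith

lemma log_le_log_floor_add_log_two {x : ℝ} (hx : 1 ≤ x) : log x ≤ log ⌊x⌋₊ + log 2 := by
  have hn : (1 : ℝ) ≤ ⌊x⌋₊ := mod_cast Nat.one_le_floor_iff x |>.mpr hx
  rw [← log_mul (by positivity) two_ne_zero]
  exact log_le_log (by linarith) (by linarith [Nat.lt_floor_add_one x])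

theorem exists_abs_sum_primesLE_log_div_sub_log_le :
    ∃ C, ∀ x : ℝ, 1 ≤ x →
      |∑ p ∈ Nat.primesLE ⌊x⌋₊, log p / p - log x| ≤ C := by
  refine ⟨1 + ∑' k : ℕ, log k / (k * (k - 1)) + log 4 + log 2, fun x hx => ?_⟩
  have hn : ⌊x⌋₊ ≠ 0 := (Nat.floor_pos.mpr hx).ne'
  have hfloor : log ⌊x⌋₊ ≤ log x :=
    log_le_log (by positivity) (Nat.floor_le (by linarith))
  have := log_le_log_floor_add_log_two hx
  have := sum_primesLE_log_div_le hn
  have := log_sub_le_sum_primesLE_log_div hn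
  have : 0 ≤ log 2 := log_nonneg one_le_two
  have : 0 ≤ log 4 := log_nonneg (by norm_num)
  have : 0 ≤ ∑' k : ℕ, log k / (k * (k - 1)) := tsum_nonneg log_div_mul_sub_one_nonneg
  rw [abs_le]
  constructor <;> linarith

lemma hasDerivAt_inv_log {t : ℝ} (ht : 1 < t) :
    HasDerivAt (fun t => (log t)⁻¹) (-(t * log t ^ 2)⁻¹) t := by
  refine ((hasDerivAt_log (by linarith)).inv (log_pos ht).ne').congr_deriv ?_
  field_simp

lemma hasDerivAt_log_log {t : ℝ} (ht : 1 < t) :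
    HasDerivAt (fun t => log (log t)) (t * log t)⁻¹ t := by
  refine ((hasDerivAt_log (log_pos ht).ne').comp t (hasDerivAt_log (by linarith))).congr_deriv ?_
  rw [mul_inv, mul_comm]

lemma continuousOn_inv_mul_log_pow (n : ℕ) :
    ContinuousOn (fun t => (t * log t ^ n)⁻¹) (Ioi 1) :=
  ((continuousOn_id.mul ((continuousOn_log.mono fun t ht => by
    simp only [mem_compl_iff, mem_singleton_iff]; linarith [ht.out]).pow n))).inv₀
    fun t ht => mul_ne_zero (by simp only [id]; linarith [ht.out]) (pow_ne_zero _ (log_pos ht).ne')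

lemma integral_inv_mul_log {a b : ℝ} (ha : 1 < a) (hab : a ≤ b) :
    ∫ t in a..b, (t * log t)⁻¹ = log (log b) - log (log a) := by
  have hsub : uIcc a b ⊆ Ioi 1 := fun t ht => by
    rw [uIcc_of_le hab] at ht; exact lt_of_lt_of_le ha ht.1
  refine intervalIntegral.integral_eq_sub_of_hasDerivAt
    (fun t ht => hasDerivAt_log_log (hsub ht)) ?_
  simpa using ((continuousOn_inv_mul_log_pow 1).mono hsub).intervalIntegrable

lemma hasDerivAt_neg_inv_log {t : ℝ} (ht : 1 < t) :
    HasDerivAt (fun t => -(log t)⁻¹) (t * log t ^ 2)⁻¹ t :=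
  (hasDerivAt_inv_log ht).neg.congr_deriv (neg_neg _)

lemma tendsto_neg_inv_log : Tendsto (fun t => -(log t)⁻¹) atTop (nhds 0) := by
  simpa using tendsto_log_atTop.inv_tendsto_atTop.neg

lemma integrableOn_Ioi_inv_mul_log_sq {b : ℝ} (hb : 1 < b) :
    IntegrableOn (fun t => (t * log t ^ 2)⁻¹) (Ioi b) :=
  integrableOn_Ioi_deriv_of_nonneg' (fun t ht => hasDerivAt_neg_inv_log (lt_of_lt_of_le hb ht))
    (fun t ht => by have := lt_trans hb ht; positivity) tendsto_neg_inv_log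

lemma integral_Ioi_inv_mul_log_sq {b : ℝ} (hb : 1 < b) :
    ∫ t in Ioi b, (t * log t ^ 2)⁻¹ = (log b)⁻¹ := by
  rw [integral_Ioi_of_hasDerivAt_of_nonneg'
    (fun t ht => hasDerivAt_neg_inv_log (lt_of_lt_of_le hb ht))
    (fun t ht => by have := lt_trans hb ht; positivity) tendsto_neg_inv_log]
  ring

section PartialSummation

variable (c : ℕ → ℝ)

noncomputable def remainder (t : ℝ) : ℝ := ∑ k ∈ Icc 0 ⌊t⌋₊, c k - log t

lemma measurable_remainder : Measurable (remainder c) :=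
  ((measurable_from_top (f := fun n : ℕ => ∑ k ∈ Icc 0 n, c k)).comp Nat.measurable_floor).sub
    measurable_log

variable {c} {M : ℝ} (hR : ∀ t, 2 ≤ t → |remainder c t| ≤ M)
include hR

lemma norm_inv_mul_log_sq_mul_remainder_le {t : ℝ} (ht : 2 ≤ t) :
    ‖(t * log t ^ 2)⁻¹ * remainder c t‖ ≤ M * (t * log t ^ 2)⁻¹ := by
  have : 0 < log t := log_pos (by linarith)
  rw [norm_mul, norm_of_nonneg (by positivity), mul_comm, norm_eq_abs]
  exact mul_le_mul_of_nonneg_right (hR t ht) (by positivity)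

lemma integrableOn_Ioi_inv_mul_log_sq_mul_remainder {b : ℝ} (hb : 2 ≤ b) :
    IntegrableOn (fun t => (t * log t ^ 2)⁻¹ * remainder c t) (Ioi b) := by
  refine Integrable.mono' ((integrableOn_Ioi_inv_mul_log_sq (by linarith)).const_mul M)
    ((by fun_prop : Measurable fun t : ℝ => (t * log t ^ 2)⁻¹).mul
      (measurable_remainder c)).aestronglyMeasurable ?_
  filter_upwards [self_mem_ae_restrict measurableSet_Ioi] with t ht
  exact norm_inv_mul_log_sq_mul_remainder_le hR (by linarith [ht.out])

lemma abs_integral_Ioi_inv_mul_log_sq_mul_remainder_le {b : ℝ} (hb : 2 ≤ b) :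
    |∫ t in Ioi b, (t * log t ^ 2)⁻¹ * remainder c t| ≤ M / log b := by
  rw [← norm_eq_abs, div_eq_mul_inv, ← integral_Ioi_inv_mul_log_sq (by linarith),
    ← integral_const_mul]
  refine norm_integral_le_of_norm_le
    ((integrableOn_Ioi_inv_mul_log_sq (by linarith)).const_mul M) ?_
  filter_upwards [self_mem_ae_restrict measurableSet_Ioi] with t ht
  exact norm_inv_mul_log_sq_mul_remainder_le hR (by linarith [ht.out])

lemma sum_div_log_eq (hc0 : c 0 = 0) (hc1 : c 1 = 0) {x : ℝ} (hx : 2 ≤ x) :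
    ∑ k ∈ Icc 0 ⌊x⌋₊, c k / log k
      = log (log x) + (1 - log (log 2)) + remainder c x / log x
        + ∫ t in (2 : ℝ)..x, (t * log t ^ 2)⁻¹ * remainder c t := by
  have hderiv : ∀ t ∈ Icc 2 x, HasDerivAt (fun t => (log t)⁻¹) (-(t * log t ^ 2)⁻¹) t :=
    fun t ht => hasDerivAt_inv_log (by linarith [ht.1])
  have hIcc : Icc 2 x ⊆ Ioi 1 := fun t ht => mem_Ioi.mpr (by linarith [ht.1])
  have habel := sum_mul_eq_sub_integral_mul₁ c hc0 hc1 x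
    (fun t ht => (hderiv t ht).differentiableAt)
    ((((continuousOn_inv_mul_log_pow 2).mono hIcc).neg.congr
      fun t ht => (hderiv t ht).deriv).integrableOn_Icc)
  have hlog : 0 < log x := log_pos (by linarith)
  have hint : ∫ t in Ioc 2 x, deriv (fun t => (log t)⁻¹) t * ∑ k ∈ Icc 0 ⌊t⌋₊, c k
      = -(log (log x) - log (log 2))
        - ∫ t in (2 : ℝ)..x, (t * log t ^ 2)⁻¹ * remainder c t := by
    rw [← integral_inv_mul_log one_lt_two hx, intervalIntegral.integral_of_le hx,
      intervalIntegral.integral_of_le hx, ← integral_neg, ← integral_sub]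
    · refine setIntegral_congr_fun measurableSet_Ioc fun t ht => ?_
      have : 0 < log t := log_pos (by linarith [ht.1])
      rw [(hderiv t (Ioc_subset_Icc_self ht)).deriv, remainder]
      field_simp
      ring
    · refine IntegrableOn.neg ?_
      simpa using ((continuousOn_inv_mul_log_pow 1).mono hIcc).integrableOn_Icc.mono_set
        Ioc_subset_Icc_self
    · exact (integrableOn_Ioi_inv_mul_log_sq_mul_remainder hR le_rfl).mono_set Ioc_subset_Ioi_self
  simp_rw [div_eq_inv_mul]
  rw [habel, hint, remainder]
  field_simp
  ring

theorem isBigO_sum_div_log_sub_log_log (hc0 : c 0 = 0) (hc1 : c 1 = 0) :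
    ∃ C, (fun x => ∑ k ∈ Icc 0 ⌊x⌋₊, c k / log k - log (log x) - C)
      =O[atTop] fun x => 1 / log x := by
  refine ⟨1 - log (log 2) + ∫ t in Ioi 2, (t * log t ^ 2)⁻¹ * remainder c t,
    .of_bound (2 * M) ?_⟩
  filter_upwards [eventually_ge_atTop 2] with x hx
  have hlog : 0 < log x := log_pos (by linarith)
  have hsplit := intervalIntegral.integral_interval_add_Ioi
    (integrableOn_Ioi_inv_mul_log_sq_mul_remainder hR le_rfl)
    (integrableOn_Ioi_inv_mul_log_sq_mul_remainder hR hx)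
  have hrem : |remainder c x / log x| ≤ M / log x := by
    rw [abs_div, abs_of_pos hlog]
    exact div_le_div_of_nonneg_right (hR x hx) hlog.le
  have htail := abs_integral_Ioi_inv_mul_log_sq_mul_remainder_le hR hx
  rw [sum_div_log_eq hR hc0 hc1 hx, ← hsplit, norm_eq_abs, norm_div, norm_one,
    norm_of_nonneg hlog.le]
  calc _ = |remainder c x / log x - ∫ t in Ioi x, (t * log t ^ 2)⁻¹ * remainder c t| := by
        ring_nf
    _ ≤ M / log x + M / log x := (abs_sub _ _).trans (add_le_add hrem htail)
    _ = 2 * M * (1 / log x) := by ring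

end PartialSummation

lemma sum_Icc_ite_prime (f : ℕ → ℝ) (n : ℕ) :
    ∑ k ∈ Icc 0 n, (if k.Prime then f k else 0) = ∑ p ∈ Nat.primesLE n, f p := by
  rw [← sum_filter, Nat.primesLE_eq_filter_Icc_zero]

lemma sum_Icc_ite_prime_log_div_div_log (n : ℕ) :
    ∑ k ∈ Icc 0 n, (if k.Prime then log k / k else 0) / log k
      = ∑ p ∈ Nat.primesLE n, (1 : ℝ) / p := by
  simp_rw [ite_div, zero_div, sum_Icc_ite_prime]
  refine sum_congr rfl fun p hp => ?_
  have : 0 < log p := log_pos (mod_cast Nat.one_lt_of_mem_primesLE hp)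
  field_simp

end Mertens

open Filter in
theorem mertens_second :
    ∃ c : ℝ,
      (fun x : ℝ =>
          (∑ p ∈ (Finset.Icc 1 ⌊x⌋₊).filter Nat.Prime, (1 : ℝ) / p)
            - Real.log (Real.log x) - c)
        =O[atTop] (fun x : ℝ => 1 / Real.log x) := by
  obtain ⟨M, hM⟩ := Mertens.exists_abs_sum_primesLE_log_div_sub_log_le
  have hR : ∀ t, 2 ≤ t →
      |Mertens.remainder (fun k => if k.Prime then log k / k else 0) t| ≤ M := fun t ht => by
    rw [Mertens.remainder, Mertens.sum_Icc_ite_prime]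
    exact hM t (by linarith)
  obtain ⟨C, hC⟩ := Mertens.isBigO_sum_div_log_sub_log_log hR (by simp [Nat.not_prime_zero])
    (by simp [Nat.not_prime_one])
  refine ⟨C, hC.congr_left fun x => ?_⟩
  rw [Mertens.sum_Icc_ite_prime_log_div_div_log, Nat.primesLE_eq_filter_Icc_one]
end

section
/- Nondecreasing integral comparison: if f : [1,∞) → ℝ is monotone nondecreasing, the improper integral ∫₁^∞ (f(x) − αx)/x² dx converges, and α > 0, then f(x)/x → α as x → ∞. -/
/-!
Over the windows `[x, c x]` and `[x / c, x]` (`c > 1`) the integral of `(f t - α t) / t²` tends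
to `0`, by convergence. On the other hand, replacing `f t` by `f x` and `α / t` by `α / x`,
monotonicity bounds it below by `(c - 1) (f x / (c x) - α)` on the first window and above by
`(c - 1) (f x / x - α / c)` on the second. So eventually `α / c - ε < f x / x < c α + ε`, and `c`
can be taken arbitrarily close to `1`.
-/

open Filter MeasureTheory Set Topology

lemma intervalIntegrable_div_sq_sub_const {a b : ℝ} (ha : 0 < a) (hb : 0 < b) (K m : ℝ) :
    IntervalIntegrable (fun t => K / t ^ 2 - m) volume a b := by
  refine ContinuousOn.intervalIntegrable ?_
  exact (continuousOn_const.div (continuousOn_pow 2) fun t ht =>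
    pow_ne_zero 2 (lt_min ha hb |>.trans_le ht.1).ne').sub continuousOn_const

lemma integral_div_sq_sub_const {a b : ℝ} (ha : 0 < a) (hab : a ≤ b) (K m : ℝ) :
    ∫ t in a..b, (K / t ^ 2 - m) = K * (1 / a - 1 / b) - m * (b - a) := by
  have hb : 0 < b := ha.trans_le hab
  rw [intervalIntegral.integral_eq_sub_of_hasDerivAt (f := fun t => -K / t - m * t)
    (fun t ht => ?_) (intervalIntegrable_div_sq_sub_const ha hb K m)]
  · field_simp
    ring
  · have ht : t ≠ 0 := (lt_min ha hb |>.trans_le ht.1).ne'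
    convert ((hasDerivAt_inv ht).const_mul (-K)).sub ((hasDerivAt_id t).const_mul m) using 1
    · ext s; simp [div_eq_mul_inv]
    · field_simp

lemma tendsto_intervalIntegral_of_tendsto_integral_Ioc {ι : Type*} {l : Filter ι}
    {h : ℝ → ℝ} {a L : ℝ} (hint : ∀ b ≥ a, IntervalIntegrable h volume a b)
    (hL : Tendsto (fun b => ∫ x in Ioc a b, h x) atTop (𝓝 L))
    {u v : ι → ℝ} (hu : Tendsto u l atTop) (hv : Tendsto v l atTop) :
    Tendsto (fun i => ∫ t in u i..v i, h t) l (𝓝 0) := by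
  have hG : Tendsto (fun b => ∫ x in a..b, h x) atTop (𝓝 L) :=
    hL.congr' (eventually_ge_atTop a |>.mono fun b hb =>
      (intervalIntegral.integral_of_le hb).symm)
  have hsub : ∀ᶠ i in l, (∫ x in a..v i, h x) - (∫ x in a..u i, h x) = ∫ t in u i..v i, h t := by
    filter_upwards [hu.eventually_ge_atTop a, hv.eventually_ge_atTop a] with i hui hvi
    exact intervalIntegral.integral_interval_sub_left (hint _ hvi) (hint _ hui)
  simpa using ((hG.comp hv).sub (hG.comp hu)).congr' hsub

lemma sub_mul_div_sq (y a t : ℝ) : (y - a * t) / t ^ 2 = y / t ^ 2 - a / t := by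
  rcases eq_or_ne t 0 with rfl | ht
  · simp
  · field_simp

variable {f : ℝ → ℝ} {α : ℝ}

lemma intervalIntegrable_sub_mul_div_sq (hf : MonotoneOn f (Ici 1)) {a b : ℝ}
    (ha : 1 ≤ a) (hb : 1 ≤ b) :
    IntervalIntegrable (fun x => (f x - α * x) / x ^ 2) volume a b := by
  have hsub : uIcc a b ⊆ Ici 1 := fun x hx => (le_min ha hb).trans hx.1
  simpa only [div_eq_mul_inv, Pi.inv_apply] using
    ((hf.mono hsub).intervalIntegrable.sub
      ((continuous_const_mul α).intervalIntegrable a b)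
      |>.mul_continuousOn ((continuousOn_pow 2).inv₀ fun x hx =>
        pow_ne_zero 2 (zero_lt_one.trans_le (hsub hx)).ne'))

lemma div_self_le_of_monotoneOn (hf : MonotoneOn f (Ici 1)) (hα : 0 ≤ α) {x c : ℝ}
    (hx : 1 ≤ x) (hc : 1 < c) :
    f x / x ≤ c * α + c / (c - 1) * ∫ t in x..c * x, (f t - α * t) / t ^ 2 := by
  have hx0 : 0 < x := zero_lt_one.trans_le hx
  have hxcx : x ≤ c * x := le_mul_of_one_le_left hx0.le hc.le
  have hI : (c - 1) * (f x / (c * x) - α) ≤ ∫ t in x..c * x, (f t - α * t) / t ^ 2 := calc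
    (c - 1) * (f x / (c * x) - α) = ∫ t in x..c * x, (f x / t ^ 2 - α / x) := by
      rw [integral_div_sq_sub_const hx0 hxcx]
      field_simp
    _ ≤ _ := by
      refine intervalIntegral.integral_mono_on hxcx
        (intervalIntegrable_div_sq_sub_const hx0 (hx0.trans_le hxcx) _ _)
        (intervalIntegrable_sub_mul_div_sq hf hx (hx.trans hxcx)) fun t ht => ?_
      have ht0 : 0 < t := hx0.trans_le ht.1
      rw [sub_mul_div_sq]
      gcongr
      exacts [hf hx (hx.trans ht.1) ht.1, ht.1]
  have hc1 : 0 < c - 1 := sub_pos.2 hc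
  calc f x / x = c * α + c / (c - 1) * ((c - 1) * (f x / (c * x) - α)) := by
        field_simp
        ring
    _ ≤ _ := by gcongr

lemma le_div_self_of_monotoneOn (hf : MonotoneOn f (Ici 1)) (hα : 0 ≤ α) {x c : ℝ}
    (hc : 1 < c) (hcx : c ≤ x) :
    α / c + (∫ t in x / c..x, (f t - α * t) / t ^ 2) / (c - 1) ≤ f x / x := by
  have hc0 : 0 < c := zero_lt_one.trans hc
  have hx0 : 0 < x := hc0.trans_le hcx
  have hxc : 1 ≤ x / c := (one_le_div hc0).2 hcx
  have hxcx : x / c ≤ x := div_le_self hx0.le hc.le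
  have hI : ∫ t in x / c..x, (f t - α * t) / t ^ 2 ≤ (c - 1) * (f x / x - α / c) := calc
    _ ≤ ∫ t in x / c..x, (f x / t ^ 2 - α / x) := by
      refine intervalIntegral.integral_mono_on hxcx
        (intervalIntegrable_sub_mul_div_sq hf hxc (hxc.trans hxcx))
        (intervalIntegrable_div_sq_sub_const (by positivity) hx0 _ _) fun t ht => ?_
      have ht0 : 0 < t := (zero_lt_one.trans_le hxc).trans_le ht.1
      rw [sub_mul_div_sq]
      gcongr
      exacts [hf (hxc.trans ht.1) (hxc.trans hxcx) ht.2, ht.2]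
    _ = (c - 1) * (f x / x - α / c) := by
      rw [integral_div_sq_sub_const (by positivity) hxcx]
      field_simp
  have hc1 : 0 < c - 1 := sub_pos.2 hc
  calc α / c + (∫ t in x / c..x, (f t - α * t) / t ^ 2) / (c - 1)
      ≤ α / c + (c - 1) * (f x / x - α / c) / (c - 1) := by gcongr
    _ = f x / x := by field_simp; ring

lemma eventually_div_self_lt (hf : MonotoneOn f (Ici 1)) (hα : 0 ≤ α) {L : ℝ}
    (hL : Tendsto (fun b => ∫ x in Ioc 1 b, (f x - α * x) / x ^ 2) atTop (𝓝 L))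
    {β : ℝ} (hβ : α < β) : ∀ᶠ x in atTop, f x / x < β := by
  have hcα : Tendsto (fun c : ℝ => c * α) (𝓝[>] 1) (𝓝 α) :=
    ((continuous_mul_const α).tendsto' 1 α (one_mul α)).mono_left nhdsWithin_le_nhds
  obtain ⟨c, hcβ, hc⟩ := ((hcα.eventually (gt_mem_nhds hβ)).and self_mem_nhdsWithin).exists
  have hI : Tendsto (fun x => ∫ t in x..c * x, (f t - α * t) / t ^ 2) atTop (𝓝 0) :=
    tendsto_intervalIntegral_of_tendsto_integral_Ioc
      (fun b hb => intervalIntegrable_sub_mul_div_sq hf le_rfl hb) hL tendsto_id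
      (tendsto_id.const_mul_atTop (zero_lt_one.trans hc))
  have hbound := (hI.const_mul (c / (c - 1))).const_add (c * α)
  rw [mul_zero, add_zero] at hbound
  filter_upwards [hbound.eventually (gt_mem_nhds hcβ), eventually_ge_atTop 1] with x hx hx1
  exact (div_self_le_of_monotoneOn hf hα hx1 hc).trans_lt hx

lemma eventually_lt_div_self (hf : MonotoneOn f (Ici 1)) (hα : 0 ≤ α) {L : ℝ}
    (hL : Tendsto (fun b => ∫ x in Ioc 1 b, (f x - α * x) / x ^ 2) atTop (𝓝 L))
    {β : ℝ} (hβ : β < α) : ∀ᶠ x in atTop, β < f x / x := by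
  have hαc : Tendsto (fun c : ℝ => α / c) (𝓝[>] 1) (𝓝 α) :=
    ((continuousAt_const.div continuousAt_id one_ne_zero).tendsto.mono_left
      nhdsWithin_le_nhds).trans_eq (by simp)
  obtain ⟨c, hβc, hc⟩ := ((hαc.eventually (lt_mem_nhds hβ)).and self_mem_nhdsWithin).exists
  have hI : Tendsto (fun x => ∫ t in x / c..x, (f t - α * t) / t ^ 2) atTop (𝓝 0) :=
    tendsto_intervalIntegral_of_tendsto_integral_Ioc
      (fun b hb => intervalIntegrable_sub_mul_div_sq hf le_rfl hb) hL
      (tendsto_id.atTop_div_const (zero_lt_one.trans hc)) tendsto_id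
  have hbound := (hI.div_const (c - 1)).const_add (α / c)
  rw [zero_div, add_zero] at hbound
  filter_upwards [hbound.eventually (lt_mem_nhds hβc), eventually_ge_atTop c] with x hx hcx
  exact hx.trans_le (le_div_self_of_monotoneOn hf hα hc hcx)

open Filter in
theorem monotone_of_integral_convergence
    (f : ℝ → ℝ) (hf : MonotoneOn f (Set.Ici 1)) (α : ℝ) (hα : 0 < α)
    (hconv : ∃ L : ℝ,
      Tendsto (fun b : ℝ => ∫ x in Set.Ioc (1 : ℝ) b, (f x - α * x) / x ^ 2)
        atTop (nhds L)) :
    Tendsto (fun x : ℝ => f x / x) atTop (nhds α) := by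
  obtain ⟨L, hL⟩ := hconv
  exact tendsto_order.2 ⟨fun β hβ => eventually_lt_div_self hf hα.le hL hβ,
    fun β hβ => eventually_div_self_lt hf hα.le hL hβ⟩
end
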